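/- Swapping an adjacent send-receive pair on the same channel, i.e., rewriting u · snd(P,Q,m) · rcv(P,Q,m') · v into u · rcv(P,Q,m') · snd(P,Q,m) · v under the condition that in u the number of snd(P,Q,_)-events strictly exceeds the number of rcv(P,Q,_)-events, preserves channel-compliance. -/
import Mathlib


/-- Events: `snd P Q m` is process `P` sending message `m` to `Q`;
    `rcv P Q m` is process `Q` receiving message `m` from `P`. -/
inductive Ev where
  | snd : ℕ → ℕ → ℕ → Ev
  | rcv : ℕ → ℕ → ℕ → Ev
deriving DecidableEq

/-- Message values of send events on channel (P,Q) in w. -/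
def sends (w : List Ev) (P Q : ℕ) : List ℕ :=
  w.filterMap fun e => match e with
    | .snd p q m => if p = P ∧ q = Q then some m else none
    | _ => none

/-- Message values of receive events on channel (P,Q) in w. -/
def recvs (w : List Ev) (P Q : ℕ) : List ℕ :=
  w.filterMap fun e => match e with
    | .rcv p q m => if p = P ∧ q = Q then some m else none
    | _ => none

def channelCompliant (w : List Ev) : Prop :=
  ∀ u, u <+: w → ∀ P Q, recvs u P Q <+: sends u P Q

def complete (w : List Ev) : Prop :=
  ∀ P Q, sends w P Q = recvs w P Q

def bounded (B : ℕ) (w : List Ev) : Prop :=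
  ∀ u, u <+: w → ∀ P Q, (sends u P Q).length ≤ (recvs u P Q).length + B

def halfDuplex (w : List Ev) : Prop :=
  ∀ u, u <+: w → ∀ P Q,
    sends u P Q = recvs u P Q ∨ sends u Q P = recvs u Q P

/-- Send at position i on channel (P,Q) is matched by receive at position j. -/
def Matches (w : List Ev) (P Q i j : ℕ) : Prop :=
  i < j ∧ j < w.length ∧
  (∃ m, w[i]? = some (.snd P Q m) ∧ w[j]? = some (.rcv P Q m)) ∧
  sends (w.take (i+1)) P Q = recvs (w.take (j+1)) P Q

def IsSendAt (w : List Ev) (P Q i : ℕ) : Prop := ∃ m, w[i]? = some (Ev.snd P Q m)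
def IsRcvAt (w : List Ev) (P Q i : ℕ) : Prop := ∃ m, w[i]? = some (Ev.rcv P Q m)
def MatchedAt (w : List Ev) (P Q i : ℕ) : Prop := ∃ j, Matches w P Q i j

/-- The process performing the event. -/
def actor : Ev → ℕ
  | .snd p _ _ => p
  | .rcv _ q _ => q

/-- Projection of a word onto the events of process X. -/
def proj (w : List Ev) (X : ℕ) : List Ev := w.filter (fun e => actor e == X)

/-- Two words induce the same MSC (same per-process orders; with FIFO matching,
    this determines the matching). -/
def sameMSC (w v : List Ev) : Prop := ∀ X, proj w X = proj v X

/-- Existentially B-bounded: some linearisation of msc(w) is B-bounded. -/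
def existBounded (B : ℕ) (w : List Ev) : Prop :=
  ∃ v, channelCompliant v ∧ sameMSC w v ∧ bounded B v

def isSnd : Ev → Prop
  | .snd _ _ _ => True
  | _ => False

def isRcv : Ev → Prop
  | .rcv _ _ _ => True
  | _ => False

/-- Positions i and j lie in the same block of the block decomposition. -/
def SameBlock (blocks : List (List Ev)) (i j : ℕ) : Prop :=
  ∃ t, ((blocks.take t).flatten).length ≤ i ∧ j < ((blocks.take (t+1)).flatten).length

/-- w is k-synchronisable: some linearisation of msc(w) splits into blocks of
    at most k sends followed by at most k receives, with matched pairs co-located. -/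
def kSynchronisable (k : ℕ) (w : List Ev) : Prop :=
  ∃ blocks : List (List Ev),
    channelCompliant blocks.flatten ∧ sameMSC w blocks.flatten ∧
    (∀ b ∈ blocks, ∃ s r, b = s ++ r ∧ s.length ≤ k ∧ r.length ≤ k ∧
      (∀ e ∈ s, isSnd e) ∧ (∀ e ∈ r, isRcv e)) ∧
    (∀ P Q i j, Matches blocks.flatten P Q i j → SameBlock blocks i j)

/-- One step of the indistinguishability relation ∼. -/
inductive Sim1 : List Ev → List Ev → Prop
  | ss (u v : List Ev) (P Q R S m m' : ℕ) (h : P ≠ R) :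
      Sim1 (u ++ Ev.snd P Q m :: Ev.snd R S m' :: v)
           (u ++ Ev.snd R S m' :: Ev.snd P Q m :: v)
  | rr (u v : List Ev) (P Q R S m m' : ℕ) (h : Q ≠ S) :
      Sim1 (u ++ Ev.rcv P Q m :: Ev.rcv R S m' :: v)
           (u ++ Ev.rcv R S m' :: Ev.rcv P Q m :: v)
  | sr (u v : List Ev) (P Q R S m m' : ℕ) (h1 : P ≠ S) (h2 : P ≠ R ∨ Q ≠ S) :
      Sim1 (u ++ Ev.snd P Q m :: Ev.rcv R S m' :: v)
           (u ++ Ev.rcv R S m' :: Ev.snd P Q m :: v)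
  | srSame (u v : List Ev) (P Q m m' : ℕ)
      (h : (recvs u P Q).length < (sends u P Q).length) :
      Sim1 (u ++ Ev.snd P Q m :: Ev.rcv P Q m' :: v)
           (u ++ Ev.rcv P Q m' :: Ev.snd P Q m :: v)

/-- The indistinguishability relation ∼ (finitely many swaps). -/
def Sim : List Ev → List Ev → Prop := Relation.ReflTransGen Sim1

lemma sends_append (a b : List Ev) (P Q : ℕ) :
    sends (a ++ b) P Q = sends a P Q ++ sends b P Q := List.filterMap_append ..

lemma recvs_append (a b : List Ev) (P Q : ℕ) :
    recvs (a ++ b) P Q = recvs a P Q ++ recvs b P Q := List.filterMap_append ..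

lemma prefix_cases {α} {w u rest : List α} (h : w <+: u ++ rest) :
    w <+: u ∨ ∃ w', w = u ++ w' ∧ w' <+: rest := by
  by_cases hl : w.length ≤ u.length
  · left
    have := List.prefix_iff_eq_take.mp h
    rw [this, List.take_append_of_le_length hl]
    exact List.take_prefix _ _
  · right
    have hu : u <+: w :=
      List.prefix_of_prefix_length_le (List.prefix_append u rest) h (le_of_not_ge hl)
    obtain ⟨w', hw'⟩ := hu
    refine ⟨w', hw'.symm, ?_⟩
    obtain ⟨t, ht⟩ := h
    rw [← hw', List.append_assoc] at ht
    exact ⟨t, (List.append_cancel_left ht)⟩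

lemma prefix_of_prefix_append_singleton {α} {l1 l2 : List α} {a : α}
    (h : l1 <+: l2 ++ [a]) (hl : l1.length ≤ l2.length) : l1 <+: l2 := by
  rw [List.prefix_iff_eq_take.mp h, List.take_append_of_le_length hl]
  exact List.take_prefix _ _

lemma aux_mid (u v : List Ev) (P Q m m' : ℕ)
    (hne : (recvs u P Q).length < (sends u P Q).length)
    (h : channelCompliant (u ++ Ev.snd P Q m :: Ev.rcv P Q m' :: v))
    (P' Q' : ℕ) :
    recvs (u ++ [Ev.rcv P Q m']) P' Q' <+: sends (u ++ [Ev.rcv P Q m']) P' Q' := by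
  rw [sends_append, recvs_append]
  by_cases hc : P = P' ∧ Q = Q'
  · obtain ⟨rfl, rfl⟩ := hc
    have horig := h (u ++ [Ev.snd P Q m, Ev.rcv P Q m']) (by exact ⟨v, by simp⟩) P Q
    rw [sends_append, recvs_append] at horig
    simp only [sends, recvs, List.filterMap_cons, if_pos (⟨rfl, rfl⟩ : P = P ∧ Q = Q),
      List.filterMap_nil] at horig ⊢
    have key := prefix_of_prefix_append_singleton (l2 := sends u P Q)
      (by simpa [sends] using horig) (by simpa [recvs] using hne)
    simpa [sends, recvs] using key
  · have hs : sends [Ev.rcv P Q m'] P' Q' = [] := by simp [sends]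
    have hr : recvs [Ev.rcv P Q m'] P' Q' = [] := by
      simp only [recvs, List.filterMap_cons, if_neg hc, List.filterMap_nil]
    rw [hs, hr, List.append_nil, List.append_nil]
    exact h u (List.prefix_append _ _) P' Q'


/-- swapping an adjacent send-receive pair on the same channel,
    when the channel is nonempty after u, preserves channel-compliance. -/
theorem swap_same_channel_preserves_channelCompliant
    (u v : List Ev) (P Q m m' : ℕ)
    (hne : (recvs u P Q).length < (sends u P Q).length)
    (h : channelCompliant (u ++ Ev.snd P Q m :: Ev.rcv P Q m' :: v)) :
    channelCompliant (u ++ Ev.rcv P Q m' :: Ev.snd P Q m :: v) := by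
  intro w hw P' Q'
  rcases prefix_cases hw with hwu | ⟨w', rfl, hw'⟩
  · exact h w (hwu.trans (List.prefix_append _ _)) P' Q'
  · rcases List.prefix_cons_iff.mp hw' with h0 | ⟨w'', rfl, hw''⟩
    · subst h0
      simpa using h u (List.prefix_append _ _) P' Q'
    · rcases List.prefix_cons_iff.mp hw'' with h0 | ⟨t, rfl, ht⟩
      · subst h0
        exact aux_mid u v P Q m m' hne h P' Q'
      · have horig := h (u ++ Ev.snd P Q m :: Ev.rcv P Q m' :: t)
          ((List.prefix_append_right_inj u).mpr
            (List.cons_prefix_cons.mpr ⟨rfl, List.cons_prefix_cons.mpr ⟨rfl, ht⟩⟩)) P' Q'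
        have hs : sends (u ++ Ev.rcv P Q m' :: Ev.snd P Q m :: t) P' Q'
            = sends (u ++ Ev.snd P Q m :: Ev.rcv P Q m' :: t) P' Q' := by
          simp [sends_append, sends, List.filterMap_cons]
        have hr : recvs (u ++ Ev.rcv P Q m' :: Ev.snd P Q m :: t) P' Q'
            = recvs (u ++ Ev.snd P Q m :: Ev.rcv P Q m' :: t) P' Q' := by
          simp [recvs_append, recvs, List.filterMap_cons]
        rw [hs, hr]
        exact horig
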